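/- arXiv:1511.03936 — 6 statements merged into one kernel-verified Lean document; each statement's English description precedes it below -/
import Mathlib

section
/- There exists a unique linear left action ▷ of U(g^L) on U(g) such that 1 ▷ X = X, X_μ ▷ X = X_μ X, T_{μν} ▷ 1 = δ_{μν}, and (ab) ▷ X = a ▷ (b ▷ X); moreover this action satisfies the multiplicativity property T_{μν} ▷ (XY) = Σ_α (T_{μα} ▷ X)(T_{αν} ▷ Y) for all X, Y in U(g). -/
/-!
The operators `T_{μν} ▷ ·` are the entries of an algebra homomorphism
`Θ : U(g) → Mat_n(U(g))`, induced by the Lie algebra map `X ↦ X • 1 + A(X)` where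
`A(X)_{μν} = C_{μXν}` is the coadjoint representation; the two summands commute because `A(X)`
has scalar entries. Multiplicativity of `Θ` is the rule
`T_{μν} ▷ (XY) = Σ_α (T_{μα} ▷ X)(T_{αν} ▷ Y)`, and `Θ 1 = 1` is `T_{μν} ▷ 1 = δ_{μν}`.
Evaluated at `X = X_λ` this rule gives `[T_{μν}, X_λ] = Σ_α C_{μλα} T_{αν}`, so letting `X_μ`
act by left multiplication yields a Lie algebra map `g^L → End U(g)`, i.e. the action.
Conversely, in any such action `T_{μν} ▷ X_λ = δ_{μν} X_λ + C_{μλν}` is forced by applying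
`T X_λ = X_λ T + [T, X_λ]` to `1`, and then `x ↦ (T_{μν} ▷ x)_{μν}` is an algebra homomorphism
agreeing with `Θ` on generators.
-/

open UniversalEnvelopingAlgebra Matrix

section

attribute [local instance 100] LieRing.ofAssociativeRing

section General

variable {R L A κ : Type*} [CommRing R] [LieRing L] [LieAlgebra R L] [Ring A] [Algebra R A]

theorem UniversalEnvelopingAlgebra.algHom_ext_basis (b : Module.Basis κ R L)
    {f₁ f₂ : UniversalEnvelopingAlgebra R L →ₐ[R] A}
    (h : ∀ i, f₁ (ι R (b i)) = f₂ (ι R (b i))) : f₁ = f₂ :=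
  hom_ext R <| LieHom.ext <| LinearMap.congr_fun <| b.ext (σ := RingHom.id R)
    (f₁ := ((f₁.toLieHom.comp (ι R) : L →ₗ⁅R⁆ A) : L →ₗ[R] A)) h

theorem UniversalEnvelopingAlgebra.ι_mul_ι (x y : L) :
    ι R x * ι R y = ι R y * ι R x + ι R ⁅x, y⁆ (L := L) := by
  rw [LieHom.map_lie, Ring.lie_def, add_sub_cancel]

theorem LinearMap.map_lie_of_basis {L' : Type*} [LieRing L'] [LieAlgebra R L']
    (b : Module.Basis κ R L) (f : L →ₗ[R] L') (h : ∀ i j, f ⁅b i, b j⁆ = ⁅f (b i), f (b j)⁆)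
    (x y : L) : f ⁅x, y⁆ = ⁅f x, f y⁆ :=
  LinearMap.congr_fun₂ (b.ext (σ := RingHom.id R)
    (f₁ := (LieModule.toEnd R L L : L →ₗ[R] Module.End R L).compr₂ f)
    (f₂ := (LieModule.toEnd R L' L' : L' →ₗ[R] Module.End R L').compl₁₂ f f)
    fun i => b.ext fun j => h i j) x y

def LieHom.addOfCommute (f₁ f₂ : L →ₗ⁅R⁆ A) (h : ∀ x y, Commute (f₁ x) (f₂ y)) :
    L →ₗ⁅R⁆ A :=
  { (f₁ : L →ₗ[R] A) + f₂ with
    map_lie' := fun {x y} => by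
      simp only [AddHom.toFun_eq_coe, LinearMap.coe_toAddHom, LinearMap.add_apply,
        LieHom.coe_toLinearMap, LieHom.map_lie, Ring.lie_def, add_mul, mul_add,
        (h x y).eq, (h y x).eq]
      abel }

theorem Module.Basis.repr_lie_of_structureConstants (b : Module.Basis κ R L) [Fintype κ]
    (C : κ → κ → κ → R) (hg : ∀ μ ν, ⁅b μ, b ν⁆ = ∑ α, C μ ν α • b α) (μ ν α : κ) :
    b.repr ⁅b μ, b ν⁆ α = C μ ν α := by
  rw [hg, b.repr_sum_self]

variable [Fintype κ] [DecidableEq κ]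

noncomputable def LieAlgebra.coadjointMatrix (b : Module.Basis κ R L) :
    L →ₗ⁅R⁆ Matrix κ κ R where
  toFun x := -(LinearMap.toMatrix b b (LieAlgebra.ad R L x))ᵀ
  map_add' x y := by simp [add_comm]
  map_smul' r x := by simp
  map_lie' := fun {x y} => by
    simp only [LieHom.map_lie, Ring.lie_def, map_sub, LinearMap.toMatrix_mul, transpose_sub,
      transpose_mul, neg_mul_neg, neg_sub]

theorem LieAlgebra.coadjointMatrix_apply (b : Module.Basis κ R L) (x : L) (μ ν : κ) :
    coadjointMatrix b x μ ν = b.repr ⁅b μ, x⁆ ν := by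
  rw [← lie_skew, map_neg, Finsupp.neg_apply]
  simp [coadjointMatrix, LinearMap.toMatrix_apply]

end General

section MatrixOfEntries

variable {R A B κ : Type*} [CommSemiring R] [Semiring A] [Algebra R A] [Semiring B] [Algebra R B]
  [Fintype κ] [DecidableEq κ]

def Matrix.algHomOfEntries (S : κ → κ → A →ₗ[R] B)
    (h_one : ∀ μ ν, S μ ν 1 = if μ = ν then 1 else 0)
    (h_mul : ∀ μ ν x y, S μ ν (x * y) = ∑ α, S μ α x * S α ν y) : A →ₐ[R] Matrix κ κ B :=
  AlgHom.ofLinearMap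
    ((ofLinearEquiv R).toLinearMap ∘ₗ LinearMap.pi fun μ => LinearMap.pi fun ν => S μ ν)
    (by ext μ ν; simp [h_one, one_apply])
    (fun x y => by ext μ ν; simp [h_mul, mul_apply])

theorem Matrix.algHomOfEntries_apply (S : κ → κ → A →ₗ[R] B)
    (h_one : ∀ μ ν, S μ ν 1 = if μ = ν then 1 else 0)
    (h_mul : ∀ μ ν x y, S μ ν (x * y) = ∑ α, S μ α x * S α ν y) (x : A) (μ ν : κ) :
    algHomOfEntries S h_one h_mul x μ ν = S μ ν x :=
  rfl

end MatrixOfEntries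

namespace UniversalEnvelopingAlgebra

variable {R L κ : Type*} [CommRing R] [LieRing L] [LieAlgebra R L] [Fintype κ] [DecidableEq κ]
  (b : Module.Basis κ R L)

noncomputable def tMatrixLie : L →ₗ⁅R⁆ Matrix κ κ (UniversalEnvelopingAlgebra R L) :=
  LieHom.addOfCommute ((scalarAlgHom κ R).toLieHom.comp (ι R))
    ((Algebra.ofId R _).mapMatrix.toLieHom.comp (LieAlgebra.coadjointMatrix b))
    fun _ _ => scalar_commute_iff.2 <| by
      ext
      simp only [LieHom.comp_apply, AlgHom.toLieHom_apply, AlgHom.mapMatrix_apply,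
        Matrix.smul_apply, map_apply, Algebra.ofId_apply, smul_eq_mul,
        MulOpposite.smul_eq_mul_unop, MulOpposite.unop_op, Algebra.commutes]

theorem tMatrixLie_apply (x : L) :
    tMatrixLie b x
      = scalar κ (ι R x) + (LieAlgebra.coadjointMatrix b x).map (algebraMap R _) :=
  rfl

/-- `tMatrix b x μ ν` is `T_{μν} ▷ x`. -/
noncomputable def tMatrix :
    UniversalEnvelopingAlgebra R L →ₐ[R] Matrix κ κ (UniversalEnvelopingAlgebra R L) :=
  lift R (tMatrixLie b)

theorem tMatrix_ι (x : L) (μ ν : κ) :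
    tMatrix b (ι R x) μ ν
      = (if μ = ν then ι R x else 0) + algebraMap R _ (b.repr ⁅b μ, x⁆ ν) := by
  rw [tMatrix, lift_ι_apply, tMatrixLie_apply]
  simp only [scalar_apply, Matrix.add_apply, diagonal_apply, map_apply,
    LieAlgebra.coadjointMatrix_apply]

theorem tMatrix_algebraMap (r : R) (μ ν : κ) :
    tMatrix b (algebraMap R (UniversalEnvelopingAlgebra R L) r) μ ν
      = if μ = ν then algebraMap R (UniversalEnvelopingAlgebra R L) r else 0 := by
  rw [AlgHom.commutes, algebraMap_matrix_apply]

theorem tMatrix_tMatrix_comm (x : UniversalEnvelopingAlgebra R L) (μ ν α β : κ) :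
    tMatrix b (tMatrix b x α β) μ ν = tMatrix b (tMatrix b x μ ν) α β := by
  -- `Θ₂ x (α, μ) (β, ν) = Θ (Θ x α β) μ ν`; it and its flip are algebra maps, equal on generators.
  let Θ₂ := (compAlgEquiv κ κ (UniversalEnvelopingAlgebra R L) R).toAlgHom.comp
    ((tMatrix b).mapMatrix.comp (tMatrix b))
  have h : (reindexAlgEquiv R _ (Equiv.prodComm κ κ)).toAlgHom.comp Θ₂ = Θ₂ :=
    hom_ext R <| LieHom.ext fun y => by
      ext ⟨μ, α⟩ ⟨ν, β⟩
      simp only [Θ₂, AlgHom.toLieHom_comp, LieHom.coe_comp, AlgHom.coe_toLieHom,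
        AlgEquiv.coe_toAlgHom, coe_reindexAlgEquiv, Function.comp_apply, AlgHom.mapMatrix_apply,
        compAlgEquiv_apply, reindex_apply, Equiv.prodComm_symm, Equiv.coe_prodComm,
        submatrix_apply, Prod.swap_prod_mk, comp_apply, map_apply, tMatrix_ι, map_add,
        Matrix.add_apply, tMatrix_algebraMap]
      by_cases hαβ : α = β <;> by_cases hμν : μ = ν <;> simp [hαβ, hμν, tMatrix_ι, -ι_apply]
      abel
  simpa [Θ₂] using congr($h x (α, μ) (β, ν)).symm

noncomputable def tOp (μ ν : κ) : Module.End R (UniversalEnvelopingAlgebra R L) :=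
  entryLinearMap R _ μ ν ∘ₗ (tMatrix b).toLinearMap

theorem tOp_apply (μ ν : κ) (x : UniversalEnvelopingAlgebra R L) :
    tOp b μ ν x = tMatrix b x μ ν :=
  rfl

theorem tOp_one (μ ν : κ) : tOp b μ ν 1 = if μ = ν then 1 else 0 := by
  rw [tOp_apply, map_one, one_apply]

theorem tOp_mul (μ ν : κ) (x y : UniversalEnvelopingAlgebra R L) :
    tOp b μ ν (x * y) = ∑ α, tOp b μ α x * tOp b α ν y := by
  simp only [tOp_apply, map_mul, mul_apply]

theorem tOp_ι_mul (μ ν : κ) (x : L) (y : UniversalEnvelopingAlgebra R L) :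
    tOp b μ ν (ι R x * y) = ι R x * tOp b μ ν y + ∑ α, b.repr ⁅b μ, x⁆ α • tOp b α ν y := by
  rw [tOp_mul]
  simp only [tOp_apply, tMatrix_ι, add_mul, ite_mul, zero_mul, Finset.sum_add_distrib,
    Finset.sum_ite_eq, Finset.mem_univ, if_true, Algebra.smul_def]

theorem commute_tOp (μ ν α β : κ) : Commute (tOp b μ ν) (tOp b α β) :=
  LinearMap.ext fun x => tMatrix_tMatrix_comm b x μ ν α β

end UniversalEnvelopingAlgebra

section ActionOfExtension

variable {K g gL κ : Type*} [CommRing K] [LieRing g] [LieAlgebra K g] [LieRing gL]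
  [LieAlgebra K gL] [Fintype κ] [DecidableEq κ]
  (b : Module.Basis κ K g) (bL : Module.Basis (κ ⊕ κ × κ) K gL)

noncomputable def extensionActionLin : gL →ₗ[K] Module.End K (UniversalEnvelopingAlgebra K g) :=
  bL.constr K (Sum.elim (fun μ => LinearMap.mulLeft K (ι K (b μ))) fun p => tOp b p.1 p.2)

theorem extensionActionLin_inl (μ : κ) :
    extensionActionLin b bL (bL (Sum.inl μ)) = LinearMap.mulLeft K (ι K (b μ)) := by
  rw [extensionActionLin, bL.constr_basis, Sum.elim_inl]

theorem extensionActionLin_inr (μ ν : κ) :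
    extensionActionLin b bL (bL (Sum.inr (μ, ν))) = tOp b μ ν := by
  rw [extensionActionLin, bL.constr_basis, Sum.elim_inr]

variable {b bL} {C : κ → κ → κ → K}
  (hg : ∀ μ ν, ⁅b μ, b ν⁆ = ∑ α, C μ ν α • b α)
  (hXX : ∀ μ ν, ⁅bL (Sum.inl μ), bL (Sum.inl ν)⁆ = ∑ α, C μ ν α • bL (Sum.inl α))
  (hTT : ∀ μ ν α β, ⁅bL (Sum.inr (μ, ν)), bL (Sum.inr (α, β))⁆ = 0)
  (hTX : ∀ μ ν lam, ⁅bL (Sum.inr (μ, ν)), bL (Sum.inl lam)⁆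
    = ∑ α, C μ lam α • bL (Sum.inr (α, ν)))
include hg

include hXX in
theorem extensionActionLin_lie_inl_inl (μ lam : κ) :
    extensionActionLin b bL ⁅bL (Sum.inl μ), bL (Sum.inl lam)⁆
      = ⁅extensionActionLin b bL (bL (Sum.inl μ)),
          extensionActionLin b bL (bL (Sum.inl lam))⁆ := by
  let mulLeftι := (Algebra.lmul K (UniversalEnvelopingAlgebra K g)).toLieHom.comp (ι K)
  have h (x : g) : LinearMap.mulLeft K (ι K x) = mulLeftι x := rfl
  simp only [hXX, map_sum, map_smul, extensionActionLin_inl, h, ← LieHom.map_lie, hg]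

include hTX in
theorem extensionActionLin_lie_inr_inl (μ ν lam : κ) :
    extensionActionLin b bL ⁅bL (Sum.inr (μ, ν)), bL (Sum.inl lam)⁆
      = ⁅extensionActionLin b bL (bL (Sum.inr (μ, ν))),
          extensionActionLin b bL (bL (Sum.inl lam))⁆ := by
  ext y
  simp only [hTX, map_sum, map_smul, extensionActionLin_inr, extensionActionLin_inl, Ring.lie_def,
    LinearMap.sub_apply, Module.End.mul_apply, LinearMap.mulLeft_apply, tOp_ι_mul,
    add_sub_cancel_left, LinearMap.sum_apply, LinearMap.smul_apply,
    b.repr_lie_of_structureConstants C hg]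

include hXX hTT hTX in
theorem extensionActionLin_map_lie (x y : gL) :
    extensionActionLin b bL ⁅x, y⁆ = ⁅extensionActionLin b bL x, extensionActionLin b bL y⁆ := by
  refine LinearMap.map_lie_of_basis bL _ ?_ x y
  rintro (μ | ⟨μ, ν⟩) (lam | ⟨α, β⟩)
  · exact extensionActionLin_lie_inl_inl hg hXX μ lam
  · rw [← lie_skew, map_neg, extensionActionLin_lie_inr_inl hg hTX, lie_skew]
  · exact extensionActionLin_lie_inr_inl hg hTX μ ν lam
  · rw [hTT, map_zero, extensionActionLin_inr, extensionActionLin_inr, Ring.lie_def,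
      (commute_tOp b μ ν α β).eq, sub_self]

noncomputable def extensionAction :
    gL →ₗ⁅K⁆ Module.End K (UniversalEnvelopingAlgebra K g) :=
  { extensionActionLin b bL with map_lie' := extensionActionLin_map_lie hg hXX hTT hTX _ _ }

end ActionOfExtension

section Uniqueness

variable {K g gL κ : Type*} [CommRing K] [LieRing g] [LieAlgebra K g] [LieRing gL]
  [LieAlgebra K gL] [Fintype κ] [DecidableEq κ]
  {b : Module.Basis κ K g} {bL : Module.Basis (κ ⊕ κ × κ) K gL} {C : κ → κ → κ → K}
  {χ : UniversalEnvelopingAlgebra K gL →ₐ[K] Module.End K (UniversalEnvelopingAlgebra K g)}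
  (hTX : ∀ μ ν lam, ⁅bL (Sum.inr (μ, ν)), bL (Sum.inl lam)⁆
    = ∑ α, C μ lam α • bL (Sum.inr (α, ν)))
  (hX : ∀ μ, χ (ι K (bL (Sum.inl μ))) = LinearMap.mulLeft K (ι K (b μ)))
  (hT_one : ∀ μ ν, χ (ι K (bL (Sum.inr (μ, ν)))) 1 = if μ = ν then 1 else 0)
include hTX hX hT_one

theorem map_ι_inr_apply_ι (μ ν lam : κ) :
    χ (ι K (bL (Sum.inr (μ, ν)))) (ι K (b lam))
      = (if μ = ν then ι K (b lam) else 0) + algebraMap K _ (C μ lam ν) := by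
  have hX_one : ι K (b lam) = χ (ι K (bL (Sum.inl lam))) 1 := by
    rw [hX, LinearMap.mulLeft_apply, mul_one]
  conv_lhs => rw [hX_one, ← Module.End.mul_apply, ← map_mul, ι_mul_ι, hTX]
  simp [-ι_apply, hX, hT_one, Algebra.algebraMap_eq_smul_one]

theorem map_ι_inr_eq_tOp (hg : ∀ μ ν, ⁅b μ, b ν⁆ = ∑ α, C μ ν α • b α)
    (hT_mul : ∀ μ ν x y, χ (ι K (bL (Sum.inr (μ, ν)))) (x * y)
      = ∑ α, χ (ι K (bL (Sum.inr (μ, α)))) x * χ (ι K (bL (Sum.inr (α, ν)))) y)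
    (μ ν : κ) : χ (ι K (bL (Sum.inr (μ, ν)))) = tOp b μ ν := by
  have h : algHomOfEntries (fun μ ν => χ (ι K (bL (Sum.inr (μ, ν))))) hT_one hT_mul = tMatrix b :=
    algHom_ext_basis b fun lam => by
      ext μ ν
      rw [algHomOfEntries_apply, map_ι_inr_apply_ι hTX hX hT_one, tMatrix_ι,
        b.repr_lie_of_structureConstants C hg]
  ext x
  exact congr($h x μ ν)

end Uniqueness

end

/-- existence and uniqueness of the left action `▷` of `U(g^L)` on `U(g)`
with `1 ▷ X = X`, `X_μ ▷ X = X_μ X`, `T_{μν} ▷ 1 = δ_{μν}`, `(ab) ▷ X = a ▷ (b ▷ X)`,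
satisfying `T_{μν} ▷ (XY) = Σ_α (T_{μα} ▷ X)(T_{αν} ▷ Y)`.  The action is encoded as an
algebra homomorphism `U(g^L) → End(U(g))`. -/
theorem stmt3 {K : Type*} [Field K] {n : ℕ}
    {g : Type*} [LieRing g] [LieAlgebra K g] (b : Module.Basis (Fin n) K g)
    {gL : Type*} [LieRing gL] [LieAlgebra K gL]
    (bL : Module.Basis (Fin n ⊕ Fin n × Fin n) K gL)
    (C : Fin n → Fin n → Fin n → K)
    (hg : ∀ μ ν, ⁅b μ, b ν⁆ = ∑ α, C μ ν α • b α)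
    (hXX : ∀ μ ν, ⁅bL (Sum.inl μ), bL (Sum.inl ν)⁆ = ∑ α, C μ ν α • bL (Sum.inl α))
    (hTT : ∀ μ ν α β, ⁅bL (Sum.inr (μ, ν)), bL (Sum.inr (α, β))⁆ = 0)
    (hTX : ∀ μ ν lam, ⁅bL (Sum.inr (μ, ν)), bL (Sum.inl lam)⁆
        = ∑ α, C μ lam α • bL (Sum.inr (α, ν))) :
    ∃! φ : UniversalEnvelopingAlgebra K gL →ₐ[K]
        Module.End K (UniversalEnvelopingAlgebra K g),
      (∀ μ, φ (ι K (bL (Sum.inl μ))) = LinearMap.mulLeft K (ι K (b μ)))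
      ∧ (∀ μ ν, φ (ι K (bL (Sum.inr (μ, ν)))) 1 = if μ = ν then 1 else 0)
      ∧ (∀ μ ν (x y : UniversalEnvelopingAlgebra K g),
          φ (ι K (bL (Sum.inr (μ, ν)))) (x * y)
            = ∑ α, φ (ι K (bL (Sum.inr (μ, α)))) x * φ (ι K (bL (Sum.inr (α, ν)))) y) := by
  set φ := lift K (extensionAction hg hXX hTT hTX)
  have hφ_X (μ) : φ (ι K (bL (Sum.inl μ))) = LinearMap.mulLeft K (ι K (b μ)) := by
    rw [lift_ι_apply]
    exact extensionActionLin_inl b bL μ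
  have hφ_T (μ ν) : φ (ι K (bL (Sum.inr (μ, ν)))) = tOp b μ ν := by
    rw [lift_ι_apply]
    exact extensionActionLin_inr b bL μ ν
  refine ⟨φ, ⟨hφ_X, fun μ ν => by rw [hφ_T, tOp_one],
    fun μ ν x y => by simp only [hφ_T, tOp_mul]⟩, ?_⟩
  rintro ψ ⟨hψ_X, hψ_one, hψ_mul⟩
  refine algHom_ext_basis bL ?_
  rintro (μ | ⟨μ, ν⟩)
  · rw [hψ_X, hφ_X]
  · rw [hφ_T, map_ι_inr_eq_tOp hTX hψ_X hψ_one hg hψ_mul]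
end

section
/- In the associative algebra H generated by X_μ, T_{μν}, T^{-1}_{μν} with relations [X_μ,X_ν] = Σ_α C_{μνα}X_α, [T_{μν},X_λ] = Σ_α C_{μλα}T_{αν}, [T^{-1}_{μν},X_λ] = Σ_α C_{λαν}T^{-1}_{μα}, commuting T's and T^{-1}'s, and Σ_α T^{-1}_{μα}T_{αν} = Σ_α T_{μα}T^{-1}_{αν} = δ_{μν}, the elements Y_μ := Σ_α X_α T^{-1}_{μα} commute with all X_ν: [X_μ, Y_ν] = 0. -/
/-! The relations say that `ad X_μ` acts on the `X_α` through the matrix `c_{αβ} = C_{μαβ}` and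
on each row `T⁻¹_{ν·}` through `-cᵀ`. Expanding `⁅X_μ, Σ_α X_α T⁻¹_{να}⁆` by the Leibniz rule,
the two resulting double sums differ only by the names of the summation indices, so they cancel. -/

open Finset

section

-- Kept local: globally it would change which bracket instance the statement of `stmt6` uses.
attribute [local instance] LieRing.ofAssociativeRing

theorem Ring.lie_mul {A : Type*} [Ring A] (a b c : A) : ⁅a, b * c⁆ = ⁅a, b⁆ * c + b * ⁅a, c⁆ := by
  simp only [Ring.lie_def]
  noncomm_ring

theorem lie_sum_mul_eq_zero_of_contragredient {K A ι : Type*} [CommSemiring K] [Ring A]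
    [Algebra K A] [Fintype ι] (a : A) (x t : ι → A) (c : ι → ι → K)
    (hx : ∀ α, ⁅a, x α⁆ = ∑ β, c α β • x β) (ht : ∀ α, ⁅t α, a⁆ = ∑ β, c β α • t β) :
    ⁅a, ∑ α, x α * t α⁆ = 0 := by
  have ht' (α : ι) : ⁅a, t α⁆ = -∑ β, c β α • t β := by rw [← lie_skew, ht]
  simp only [lie_sum, Ring.lie_mul, hx, ht', sum_mul, mul_neg, mul_sum, smul_mul_assoc,
    mul_smul_comm, sum_add_distrib, sum_neg_distrib]
  rw [sum_comm, add_neg_cancel]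

end

theorem stmt6_general {K : Type*} [Field K] {n : ℕ} {H : Type*} [Ring H] [Algebra K H]
    (X : Fin n → H) (Tinv : Fin n → Fin n → H) (C : Fin n → Fin n → Fin n → K)
    (hXX : ∀ μ ν, ⁅X μ, X ν⁆ = ∑ α, C μ ν α • X α)
    (hTiX : ∀ μ ν lam, ⁅Tinv μ ν, X lam⁆ = ∑ α, C lam α ν • Tinv μ α) :
    ∀ μ ν, ⁅X μ, ∑ α, X α * Tinv ν α⁆ = 0 :=
  fun μ ν => lie_sum_mul_eq_zero_of_contragredient (X μ) X (Tinv ν) (C μ) (hXX μ)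
    fun α => hTiX ν α μ

/-- in the algebra `H`, the elements `Y_μ = Σ_α X_α T⁻¹_{μα}` commute with
all `X_ν`. -/
theorem stmt6 {K : Type*} [Field K] {n : ℕ} {H : Type*} [Ring H] [Algebra K H]
    (X : Fin n → H) (T Tinv : Fin n → Fin n → H) (C : Fin n → Fin n → Fin n → K)
    (hXX : ∀ μ ν, ⁅X μ, X ν⁆ = ∑ α, C μ ν α • X α)
    (hTT : ∀ μ ν α β, ⁅T μ ν, T α β⁆ = 0)
    (hTiTi : ∀ μ ν α β, ⁅Tinv μ ν, Tinv α β⁆ = 0)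
    (hTX : ∀ μ ν lam, ⁅T μ ν, X lam⁆ = ∑ α, C μ lam α • T α ν)
    (hTiX : ∀ μ ν lam, ⁅Tinv μ ν, X lam⁆ = ∑ α, C lam α ν • Tinv μ α)
    (hTiT : ∀ μ ν, ∑ α, Tinv μ α * T α ν = if μ = ν then 1 else 0)
    (hTTi : ∀ μ ν, ∑ α, T μ α * Tinv α ν = if μ = ν then 1 else 0) :
    ∀ μ ν, ⁅X μ, ∑ α, X α * Tinv ν α⁆ = 0 :=
  stmt6_general X Tinv C hXX hTiX
end

section
/- Let C be the n×n matrix with entries C_{μν} = Σ_α C_{μαν} ∂_α in the (semicompleted) Weyl algebra, where C_{μαν} are structure constants of a Lie algebra. Then for all m ≥ 1 and indices μ, ν, λ: Σ_α (C^m)_{μα} C_{αλν} = Σ_{α,β} [Σ_{k=0}^{m} binom(m,k) (-1)^k (C^k)_{λα} (C^{m-k})_{βν}] C_{μαβ}. -/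
/-!
Write `A_μ` for the matrix `(C_{μαβ})_{αβ}` and `D X = X C - C X`. The Jacobi identity says exactly
that `Σ_α C_{μα} A_α = D A_μ`; since `D` is linear over the polynomial ring, induction on `m` gives
`Σ_α (C^m)_{μα} A_α = D^m A_μ`. Left and right multiplication by `C` commute, so `D^m` expands by
the binomial theorem, and the `(λ, ν)` entry of that expansion is the right-hand side.
-/

open MvPolynomial Finset

theorem Matrix.sum_pow_apply_smul_eq_pow_apply {R V ι : Type*} [CommSemiring R] [AddCommMonoid V]
    [Module R V] [Fintype ι] [DecidableEq ι] (D : Module.End R V) (M : Matrix ι ι R) (A : ι → V)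
    (h : ∀ μ, ∑ α, M μ α • A α = D (A μ)) (m : ℕ) (μ : ι) :
    ∑ α, (M ^ m) μ α • A α = (D ^ m) (A μ) := by
  induction m generalizing μ with
  | zero => simp [Matrix.one_apply, ite_smul]
  | succ m ih =>
    calc ∑ α, (M ^ (m + 1)) μ α • A α = ∑ γ, M μ γ • ∑ α, (M ^ m) γ α • A α := by
          simp only [pow_succ', Matrix.mul_apply, sum_smul, smul_sum, mul_smul]
          exact sum_comm
      _ = (D ^ m) (∑ γ, M μ γ • A γ) := by simp only [ih, map_sum, map_smul]
      _ = (D ^ (m + 1)) (A μ) := by rw [h, pow_succ, Module.End.mul_apply]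

theorem LinearMap.pow_mulRight_sub_mulLeft_apply {R A : Type*} [CommRing R] [Ring A] [Algebra R A]
    (a x : A) (m : ℕ) :
    ((mulRight R a - mulLeft R a) ^ m) x
      = ∑ k ∈ Finset.range (m + 1), ((m.choose k : R) * (-1) ^ k) • (a ^ k * x * a ^ (m - k)) := by
  rw [← neg_add_eq_sub, ← neg_one_smul R (mulLeft R a),
    ((commute_mulLeft_right a a).smul_left (-1 : R)).add_pow, LinearMap.sum_apply]
  refine sum_congr rfl fun k _ => ?_
  rw [smul_pow, pow_mulLeft, pow_mulRight]
  simp only [Module.End.mul_apply, Module.End.natCast_apply, LinearMap.smul_apply, mulLeft_apply,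
    mulRight_apply, mul_smul, Nat.cast_smul_eq_nsmul, mul_assoc]
  rw [smul_mul_assoc, mul_smul_comm, smul_comm]

section StructureConstants

variable {K ι : Type*} [CommRing K] [Fintype ι] (c : ι → ι → ι → K)

noncomputable def structureMatrix (μ : ι) : Matrix ι ι (MvPolynomial ι K) :=
  Matrix.of fun α β => C (c μ α β)

variable (hanti : ∀ μ ν α, c μ ν α = - c ν μ α)
  (hjac : ∀ μ α β ν, ∑ ρ, (c μ α ρ * c ρ β ν + c α β ρ * c ρ μ ν + c β μ ρ * c ρ α ν) = 0)
include hanti hjac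

theorem jacobi_structureConstants (μ ρ l ν : ι) :
    ∑ α, c μ ρ α * c α l ν = ∑ β, c μ l β * c β ρ ν - ∑ α, c l ρ α * c μ α ν := by
  rw [← sub_eq_zero, ← hjac μ ρ l ν, ← sum_sub_distrib, ← sum_sub_distrib]
  refine sum_congr rfl fun s _ => ?_
  rw [hanti l μ s, hanti s μ ν, hanti s ρ ν, hanti ρ l s]
  ring

variable {M : Matrix ι ι (MvPolynomial ι K)} (hM : ∀ μ ν, M μ ν = ∑ α, C (c μ α ν) * X α)
include hM

theorem sum_mul_C_eq_sub (μ l ν : ι) :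
    ∑ α, M μ α * C (c α l ν) = ∑ β, C (c μ l β) * M β ν - ∑ α, M l α * C (c μ α ν) := by
  calc ∑ α, M μ α * C (c α l ν) = ∑ ρ, C (∑ α, c μ ρ α * c α l ν) * X ρ := by
        simp only [hM, sum_mul, map_sum, map_mul]
        rw [sum_comm]
        exact sum_congr rfl fun _ _ => sum_congr rfl fun _ _ => by ring
    _ = ∑ ρ, C (∑ β, c μ l β * c β ρ ν - ∑ α, c l ρ α * c μ α ν) * X ρ :=
        sum_congr rfl fun ρ _ => by rw [jacobi_structureConstants c hanti hjac μ ρ l ν]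
    _ = _ := by
        simp only [hM, map_sub, sub_mul, sum_sub_distrib, mul_sum, sum_mul, map_sum, map_mul]
        refine congrArg₂ (· - ·) ?_ ?_ <;> rw [sum_comm] <;>
          exact sum_congr rfl fun _ _ => sum_congr rfl fun _ _ => by ring

theorem sum_smul_structureMatrix_eq [DecidableEq ι] (μ : ι) :
    ∑ α, M μ α • structureMatrix c α
      = (LinearMap.mulRight (MvPolynomial ι K) M - LinearMap.mulLeft (MvPolynomial ι K) M)
          (structureMatrix c μ) := by
  ext l ν
  simp only [Matrix.sum_apply, Matrix.smul_apply, smul_eq_mul, LinearMap.sub_apply,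
    LinearMap.mulRight_apply, LinearMap.mulLeft_apply, Matrix.sub_apply, Matrix.mul_apply,
    structureMatrix, Matrix.of_apply]
  rw [sum_mul_C_eq_sub c hanti hjac hM μ l ν]

end StructureConstants

/-- for the matrix `C_{μν} = Σ_α C_{μαν}∂_α` built from structure constants,
`Σ_α (C^m)_{μα} C_{αλν} = Σ_{α,β} [Σ_{k=0}^m binom(m,k)(-1)^k (C^k)_{λα}(C^{m-k})_{βν}] C_{μαβ}`
for all `m ≥ 1`. -/
theorem stmt9 {K : Type*} [Field K] {n : ℕ} (c : Fin n → Fin n → Fin n → K)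
    (hanti : ∀ μ ν α, c μ ν α = - c ν μ α)
    (hjac : ∀ μ α β ν, ∑ ρ, (c μ α ρ * c ρ β ν + c α β ρ * c ρ μ ν + c β μ ρ * c ρ α ν) = 0)
    (M : Matrix (Fin n) (Fin n) (MvPolynomial (Fin n) K))
    (hM : ∀ μ ν, M μ ν = ∑ α, MvPolynomial.C (c μ α ν) * MvPolynomial.X α) :
    ∀ (m : ℕ), 1 ≤ m → ∀ μ ν lam,
      ∑ α, (M ^ m) μ α * MvPolynomial.C (c α lam ν)
        = ∑ α, ∑ β,
            (∑ k ∈ Finset.range (m + 1),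
              (m.choose k : MvPolynomial (Fin n) K) * (-1) ^ k
                * (M ^ k) lam α * (M ^ (m - k)) β ν)
            * MvPolynomial.C (c μ α β) := by
  intro m _ μ ν lam
  have key := Matrix.sum_pow_apply_smul_eq_pow_apply _ M _
    (sum_smul_structureMatrix_eq c hanti hjac hM) m μ
  rw [LinearMap.pow_mulRight_sub_mulLeft_apply] at key
  replace key := congrFun (congrFun key lam) ν
  simp only [Matrix.sum_apply, Matrix.smul_apply, Matrix.mul_apply, structureMatrix,
    Matrix.of_apply, smul_eq_mul] at key
  rw [key]
  simp only [mul_sum, sum_mul]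
  conv_rhs => rw [sum_comm_cycle]
  refine sum_congr rfl fun k _ => ?_
  rw [sum_comm]
  exact sum_congr rfl fun _ _ => sum_congr rfl fun _ _ => by ring
end

section
/- With C the matrix C_{μν} = Σ_α C_{μαν}∂_α over the polynomial ring in commuting variables ∂_1,...,∂_n, the formal partial derivative satisfies ∂/∂∂_λ (C^m)_{μν} = Σ_{α,β} C_{μαβ} [Σ_{k=1}^{m} binom(m,k) (-1)^{k-1} (C^{k-1})_{λα} (C^{m-k})_{βν}] for all m ≥ 1. -/
/-!
Write `A(v) = structMatrix c v = Σ_α v_α A_α` with `(A_α)_{μν} = C_{μαν}`, so that the matrix of the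
statement is `C = A(∂)`. Up to sign and transposition `A` is the adjoint representation, and the
Jacobi identity becomes `C A(v) - A(v) C = -A(v C)`. Differentiating gives
`∂_λ C^m = Σ_{i+j=m-1} C^i A_λ C^j`. Writing left multiplication by `C` as `ad C` plus right
multiplication by `C`, which commute, the binomial theorem turns this into
`Σ_{i+j=m-1} binom(m, i+1) (ad C)^i (A_λ) C^j`, and `(ad C)^i A_λ = (-1)^i A(row_λ C^i)`.
-/

open MvPolynomial Finset Matrix

theorem Commute.sum_antidiagonal_add_pow_mul_pow {S : Type*} [Semiring S] {x y : S}
    (h : Commute x y) (m : ℕ) :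
    ∑ p ∈ antidiagonal m, (x + y) ^ p.1 * y ^ p.2 =
      ∑ p ∈ antidiagonal m, (m + 1).choose (p.1 + 1) • (x ^ p.1 * y ^ p.2) := by
  induction m with
  | zero => simp
  | succ m ih =>
    have hpascal : ∑ p ∈ antidiagonal (m + 1), (m + 2).choose (p.1 + 1) • (x ^ p.1 * y ^ p.2) =
        (x + y) ^ (m + 1) +
          ∑ p ∈ antidiagonal (m + 1), (m + 1).choose (p.1 + 1) • (x ^ p.1 * y ^ p.2) := by
      simp only [Nat.choose_succ_succ, add_nsmul, sum_add_distrib, h.add_pow']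
    rw [hpascal, Nat.sum_antidiagonal_succ', Nat.sum_antidiagonal_succ']
    simp only [pow_zero, mul_one, Nat.choose_succ_self, zero_smul, zero_mul, zero_add, pow_succ,
      ← mul_assoc, ← smul_mul_assoc, ← sum_mul, ih]

theorem sum_antidiagonal_pow_mul_mul_pow {R A : Type*} [CommSemiring R] [Ring A] [Algebra R A]
    (a b : A) (m : ℕ) :
    ∑ p ∈ antidiagonal m, a ^ p.1 * b * a ^ p.2 =
      ∑ p ∈ antidiagonal m, (m + 1).choose (p.1 + 1) •
        (((LinearMap.mulLeft R a - LinearMap.mulRight R a) ^ p.1) b * a ^ p.2) := by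
  have hcomm : Commute (LinearMap.mulLeft R a - LinearMap.mulRight R a) (LinearMap.mulRight R a) :=
    (LinearMap.commute_mulLeft_right a a).sub_left (Commute.refl _)
  have key := hcomm.sum_antidiagonal_add_pow_mul_pow m
  rw [sub_add_cancel] at key
  simp_rw [(hcomm.pow_pow _ _).eq] at key
  simpa [LinearMap.sum_apply, LinearMap.pow_mulLeft, LinearMap.pow_mulRight, mul_assoc] using
    congrArg (fun f : Module.End R A => f b) key

theorem Finset.sum_Icc_one_eq_sum_range {M : Type*} [AddCommMonoid M] (m : ℕ) (f : ℕ → M) :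
    ∑ k ∈ Icc 1 m, f k = ∑ k ∈ range m, f (k + 1) := by
  rw [← Ico_add_one_right_eq_Icc, sum_Ico_eq_sum_range]
  simp [add_comm]

section Derivation

variable {R S : Type*} [CommSemiring R] [CommSemiring S] [Algebra R S] (D : Derivation R S S)

theorem Matrix.mul_map_derivation {l m n : Type*} [Fintype m] (P : Matrix l m S)
    (Q : Matrix m n S) : (P * Q).map D = P.map D * Q + P * Q.map D := by
  ext μ ν
  simp only [Matrix.map_apply, Matrix.mul_apply, Matrix.add_apply, map_sum, Derivation.leibniz,
    smul_eq_mul, ← sum_add_distrib]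
  exact sum_congr rfl fun _ _ => by ring

theorem Matrix.pow_succ_map_derivation {ι : Type*} [Fintype ι] [DecidableEq ι]
    (P : Matrix ι ι S) (m : ℕ) :
    (P ^ (m + 1)).map D = ∑ p ∈ antidiagonal m, P ^ p.1 * P.map D * P ^ p.2 := by
  induction m with
  | zero => simp
  | succ m ih =>
    rw [pow_succ', mul_map_derivation, ih, Nat.sum_antidiagonal_succ, mul_sum]
    simp only [pow_zero, one_mul, pow_succ', mul_assoc]

end Derivation

section StructureConstants

variable {R ι : Type*} [CommRing R] [Fintype ι] (c : ι → ι → ι → R)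

def structMatrix (v : ι → R) : Matrix ι ι R := Matrix.of fun μ ν => ∑ α, c μ α ν * v α

variable {c}

theorem sum_mul_sub_mul_eq_of_jacobi (hanti : ∀ μ ν α, c μ ν α = - c ν μ α)
    (hjac : ∀ μ α β ν, ∑ ρ, (c μ α ρ * c ρ β ν + c α β ρ * c ρ μ ν + c β μ ρ * c ρ α ν) = 0)
    (μ a b ν : ι) :
    ∑ ρ, (c μ a ρ * c ρ b ν - c μ b ρ * c ρ a ν) = ∑ ρ, c a b ρ * c μ ρ ν := by
  rw [← sub_eq_zero, ← sum_sub_distrib, ← hjac μ a b ν]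
  refine sum_congr rfl fun ρ _ => ?_
  rw [hanti ρ μ ν, hanti b μ ρ]
  ring

theorem structMatrix_mul_sub_mul (hanti : ∀ μ ν α, c μ ν α = - c ν μ α)
    (hjac : ∀ μ α β ν, ∑ ρ, (c μ α ρ * c ρ β ν + c α β ρ * c ρ μ ν + c β μ ρ * c ρ α ν) = 0)
    (u v : ι → R) :
    structMatrix c u * structMatrix c v - structMatrix c v * structMatrix c u =
      structMatrix c (u ᵥ* structMatrix c v) := by
  ext μ ν
  calc _ = ∑ a, ∑ b, u a * v b * ∑ ρ, (c μ a ρ * c ρ b ν - c μ b ρ * c ρ a ν) := by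
        simp only [Matrix.sub_apply, Matrix.mul_apply, structMatrix, of_apply, sum_mul, mul_sum,
          mul_sub, sum_sub_distrib]
        congr 1
        · rw [← sum_comm_cycle, sum_comm]
          exact sum_congr rfl fun _ _ => sum_congr rfl fun _ _ => sum_congr rfl fun _ _ => by ring
        · rw [← sum_comm_cycle]
          exact sum_congr rfl fun _ _ => sum_congr rfl fun _ _ => sum_congr rfl fun _ _ => by ring
    _ = _ := by
        simp only [sum_mul_sub_mul_eq_of_jacobi hanti hjac, structMatrix, of_apply, vecMul,
          dotProduct, mul_sum]
        rw [sum_comm_cycle]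
        exact sum_congr rfl fun _ _ => sum_congr rfl fun _ _ => sum_congr rfl fun _ _ => by ring

theorem commutator_pow_structMatrix [DecidableEq ι] (hanti : ∀ μ ν α, c μ ν α = - c ν μ α)
    (hjac : ∀ μ α β ν, ∑ ρ, (c μ α ρ * c ρ β ν + c α β ρ * c ρ μ ν + c β μ ρ * c ρ α ν) = 0)
    (w v : ι → R) (k : ℕ) :
    ((LinearMap.mulLeft R (structMatrix c w) - LinearMap.mulRight R (structMatrix c w)) ^ k)
        (structMatrix c v) = (-1 : R) ^ k • structMatrix c (v ᵥ* structMatrix c w ^ k) := by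
  induction k with
  | zero => simp
  | succ k ih =>
    rw [pow_succ', Module.End.mul_apply, ih, map_smul, LinearMap.sub_apply,
      LinearMap.mulLeft_apply, LinearMap.mulRight_apply, ← neg_sub,
      structMatrix_mul_sub_mul hanti hjac, vecMul_vecMul, ← pow_succ, smul_neg, ← neg_smul,
      pow_succ (-1 : R), mul_neg_one]

theorem structMatrix_map_derivation {S : Type*} [CommSemiring S] [Algebra S R]
    (D : Derivation S R R) (hc : ∀ μ α ν, D (c μ α ν) = 0) (v : ι → R) :
    (structMatrix c v).map D = structMatrix c (fun α => D (v α)) := by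
  ext μ ν
  simp [structMatrix, Derivation.leibniz, hc]

theorem structMatrix_pow_succ_map_derivation [DecidableEq ι] {S : Type*} [CommSemiring S]
    [Algebra S R] (D : Derivation S R R) (hc : ∀ μ α ν, D (c μ α ν) = 0)
    (hanti : ∀ μ ν α, c μ ν α = - c ν μ α)
    (hjac : ∀ μ α β ν, ∑ ρ, (c μ α ρ * c ρ β ν + c α β ρ * c ρ μ ν + c β μ ρ * c ρ α ν) = 0)
    (v : ι → R) (m : ℕ) :
    (structMatrix c v ^ (m + 1)).map D =
      ∑ p ∈ antidiagonal m, ((m + 1).choose (p.1 + 1) * (-1) ^ p.1 : R) •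
        (structMatrix c ((fun α => D (v α)) ᵥ* structMatrix c v ^ p.1) *
          structMatrix c v ^ p.2) := by
  rw [pow_succ_map_derivation, structMatrix_map_derivation D hc,
    sum_antidiagonal_pow_mul_mul_pow (R := R)]
  simp only [commutator_pow_structMatrix hanti hjac, smul_mul_assoc, ← Nat.cast_smul_eq_nsmul R,
    smul_smul]

end StructureConstants

theorem structMatrix_X_pow_succ_map_pderiv {K σ : Type*} [CommRing K] [Fintype σ] [DecidableEq σ]
    (c : σ → σ → σ → K) (hanti : ∀ μ ν α, c μ ν α = - c ν μ α)
    (hjac : ∀ μ α β ν, ∑ ρ, (c μ α ρ * c ρ β ν + c α β ρ * c ρ μ ν + c β μ ρ * c ρ α ν) = 0)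
    (lam : σ) (m : ℕ) :
    let M := structMatrix (fun μ α ν => C (c μ α ν)) X
    (M ^ (m + 1)).map (pderiv lam) =
      ∑ p ∈ antidiagonal m, ((m + 1).choose (p.1 + 1) * (-1) ^ p.1 : MvPolynomial σ K) •
        (structMatrix (fun μ α ν => C (c μ α ν)) ((M ^ p.1) lam) * M ^ p.2) := by
  have hX : (fun α => pderiv lam (X α : MvPolynomial σ K)) = Pi.single lam 1 :=
    funext (pderiv_X lam)
  have h := structMatrix_pow_succ_map_derivation (c := fun μ α ν => C (c μ α ν)) (pderiv lam)
    (fun _ _ _ => pderiv_C)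
    (fun μ ν α => by simp only [hanti μ ν α, map_neg])
    (fun μ α β ν => by simp only [← map_mul, ← map_add, ← map_sum, hjac, map_zero]) X m
  rw [hX] at h
  simpa only [single_one_vecMul, Matrix.row_apply'] using h

/-- the formal partial derivative of the entries of `C^m` satisfies
`∂/∂∂_λ (C^m)_{μν} = Σ_{α,β} C_{μαβ} [Σ_{k=1}^m binom(m,k)(-1)^{k-1}(C^{k-1})_{λα}(C^{m-k})_{βν}]`. -/
theorem stmt10 {K : Type*} [Field K] {n : ℕ} (c : Fin n → Fin n → Fin n → K)
    (hanti : ∀ μ ν α, c μ ν α = - c ν μ α)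
    (hjac : ∀ μ α β ν, ∑ ρ, (c μ α ρ * c ρ β ν + c α β ρ * c ρ μ ν + c β μ ρ * c ρ α ν) = 0)
    (M : Matrix (Fin n) (Fin n) (MvPolynomial (Fin n) K))
    (hM : ∀ μ ν, M μ ν = ∑ α, MvPolynomial.C (c μ α ν) * MvPolynomial.X α) :
    ∀ (m : ℕ), 1 ≤ m → ∀ μ ν lam,
      MvPolynomial.pderiv lam ((M ^ m) μ ν)
        = ∑ α, ∑ β, MvPolynomial.C (c μ α β)
            * (∑ k ∈ Finset.Icc 1 m,
                (m.choose k : MvPolynomial (Fin n) K) * (-1) ^ (k - 1)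
                  * (M ^ (k - 1)) lam α * (M ^ (m - k)) β ν) := by
  intro m hm μ ν lam
  obtain ⟨m, rfl⟩ := Nat.exists_eq_add_one.mpr hm
  obtain rfl : M = structMatrix (fun μ α ν => C (c μ α ν)) X := Matrix.ext hM
  rw [← Matrix.map_apply (f := pderiv lam), structMatrix_X_pow_succ_map_pderiv c hanti hjac lam m]
  simp only [Matrix.sum_apply, Matrix.smul_apply, Matrix.mul_apply, structMatrix, of_apply,
    smul_eq_mul, mul_sum, sum_mul, sum_Icc_one_eq_sum_range,
    Nat.sum_antidiagonal_eq_sum_range_succ_mk, Nat.add_sub_cancel, Nat.add_sub_add_right]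
  rw [← sum_comm_cycle, sum_comm]
  exact sum_congr rfl fun _ _ => sum_congr rfl fun _ _ => sum_congr rfl fun _ _ => by ring
end

section
/- With C the matrix C_{μν} = Σ_α C_{μαν}∂_α built from Lie algebra structure constants, one has Σ_{α,β,ρ} C_{βρα} (e^C)_{ακ} (e^{-C})_{μρ} (e^{-C})_{νβ} = -C_{μνκ} for all indices μ, ν, κ. -/
/-!
Write `M = Cmat c` and `T a b e = ∑ c_{βρα} (M^a)_{ακ} (M^b)_{μρ} (M^e)_{νβ}`. Antisymmetry and
the Jacobi identity say exactly that `M` (whose `∂_λ`-component is `e_x ↦ [e_x, e_λ]`) is a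
derivation of the bracket, which gives `T (a+1) b e = T a (b+1) e + T a b (e+1)`. The entries of
`M^m` are homogeneous of degree `m`, so the degree-`D` part of the left side is
`∑_{a+b+e=D} (-1)^(b+e)/(a! b! e!) • T a b e`. By the recursion, `∑_{b+e=E} (E choose b) • T a b e`
depends only on `a + E`, so this sum is `(∑_{a+E=D} (-1)^E/(a! E!)) • (…)`, whose scalar is the
degree-`D` coefficient of `e^x e^{-x} = 1`. Only `D = 0` survives, leaving
`T 0 0 0 = c_{νμκ} = -c_{μνκ}`.
-/

noncomputable section

/-- total degree of a monomial exponent. -/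
def deg {n : ℕ} (d : Fin n →₀ ℕ) : ℕ := d.sum fun _ k => k

/-- the matrix power series `Σ_m a_m M^m` (entrywise; well defined since the entries of
`M` below have zero constant term, so the coefficient of `d` only involves `m ≤ deg d`). -/
def matF {K : Type*} [Field K] {n : ℕ} (a : ℕ → K)
    (M : Matrix (Fin n) (Fin n) (MvPowerSeries (Fin n) K)) :
    Matrix (Fin n) (Fin n) (MvPowerSeries (Fin n) K) :=
  fun μ ν d => ∑ m ∈ Finset.range (deg d + 1), a m * MvPowerSeries.coeff d ((M ^ m) μ ν)

/-- the matrix `C_{μν} = Σ_α C_{μαν} ∂_α`. -/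
def Cmat {K : Type*} [Field K] {n : ℕ} (c : Fin n → Fin n → Fin n → K) :
    Matrix (Fin n) (Fin n) (MvPowerSeries (Fin n) K) :=
  fun μ ν => ∑ α, (MvPowerSeries.C : K →+* MvPowerSeries (Fin n) K) (c μ α ν) * MvPowerSeries.X α

open Finset

namespace MvPowerSeries

variable {σ R : Type*} [CommSemiring R]

theorem isHomogeneous_C (r : R) : (C r : MvPowerSeries σ R).IsHomogeneous 0 := by
  classical
  intro d hd
  obtain rfl : d = 0 := by_contra fun h => hd (by simp [coeff_C, h])
  simp

theorem isHomogeneous_X (i : σ) : (X i : MvPowerSeries σ R).IsHomogeneous 1 := by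
  classical
  intro d hd
  obtain rfl : d = Finsupp.single i 1 := by_contra fun h => hd (by simp [coeff_X, h])
  rw [Finsupp.weight_single, Pi.one_apply, smul_eq_mul, mul_one]

theorem isHomogeneous_sum {ι : Type*} (s : Finset ι) {f : ι → MvPowerSeries σ R} {p : ℕ}
    (h : ∀ i ∈ s, (f i).IsHomogeneous p) : (∑ i ∈ s, f i).IsHomogeneous p := by
  rw [isHomogeneous_iff_eq_homogeneousComponent, map_sum]
  exact sum_congr rfl fun i hi => isHomogeneous_iff_eq_homogeneousComponent.1 (h i hi)

theorem isHomogeneous_matrix_pow_apply {ι : Type*} [Fintype ι] [DecidableEq ι]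
    {M : Matrix ι ι (MvPowerSeries σ R)} {p : ℕ} (hM : ∀ i j, (M i j).IsHomogeneous p) (k : ℕ)
    (i j : ι) : ((M ^ k) i j).IsHomogeneous (p * k) := by
  induction k generalizing j with
  | zero =>
    rw [pow_zero, Matrix.one_apply, mul_zero]
    split_ifs
    · exact map_one (C (σ := σ) (R := R)) ▸ isHomogeneous_C 1
    · exact map_zero (C (σ := σ) (R := R)) ▸ isHomogeneous_C 0
  | succ k ih =>
    rw [pow_succ, Matrix.mul_apply, mul_add_one]
    exact isHomogeneous_sum _ fun l _ => IsHomogeneous.mul (ih l) (hM l j)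

theorem homogeneousComponent_C (r : R) (m : ℕ) :
    homogeneousComponent m (C r : MvPowerSeries σ R) = if m = 0 then C r else 0 := by
  classical
  ext d
  simp only [coeff_homogeneousComponent, coeff_C, apply_ite (coeff d), map_zero]
  split_ifs <;> simp_all [Finsupp.degree_eq_zero_iff]

theorem homogeneousComponent_C_mul (r : R) (f : MvPowerSeries σ R) (m : ℕ) :
    homogeneousComponent m (C r * f) = C r * homogeneousComponent m f := by
  rw [← smul_eq_C_mul, ← smul_eq_C_mul, map_smul]

theorem homogeneousComponent_mul (f g : MvPowerSeries σ R) (m : ℕ) :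
    homogeneousComponent m (f * g)
      = ∑ p ∈ antidiagonal m, homogeneousComponent p.1 f * homogeneousComponent p.2 g := by
  classical
  ext d
  simp only [coeff_homogeneousComponent, coeff_mul, map_sum, ite_zero_mul_ite_zero]
  rw [sum_comm, eq_comm]
  conv_rhs => rw [← sum_const_zero (s := antidiagonal d), ← sum_ite_irrel]
  refine sum_congr rfl fun q hq => ?_
  have hpair (p : ℕ × ℕ) : (q.1.degree = p.1 ∧ q.2.degree = p.2) ↔ (q.1.degree, q.2.degree) = p :=
    (Prod.ext_iff (x := (q.1.degree, q.2.degree)) (y := p)).symm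
  simp_rw [hpair, sum_ite_eq, HasAntidiagonal.mem_antidiagonal, ← map_add,
    HasAntidiagonal.mem_antidiagonal.1 hq]

theorem ext_homogeneousComponent {f g : MvPowerSeries σ R}
    (h : ∀ m, homogeneousComponent m f = homogeneousComponent m g) : f = g := by
  ext d
  simpa [coeff_homogeneousComponent] using congrArg (coeff d) (h d.degree)

end MvPowerSeries

theorem inv_factorial_mul_inv_factorial {K : Type*} [Field K] [CharZero K] {i j n : ℕ}
    (h : i + j = n) :
    (i.factorial : K)⁻¹ * (j.factorial : K)⁻¹ = (n.choose i : K) * (n.factorial : K)⁻¹ := by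
  subst h
  rw [Nat.cast_add_choose, div_mul_eq_mul_div,
    mul_inv_cancel₀ (Nat.cast_ne_zero.2 (Nat.factorial_ne_zero _)), one_div, mul_inv]

theorem sum_antidiagonal_exp_mul_exp_neg {K : Type*} [Field K] [CharZero K] (D : ℕ) :
    ∑ p ∈ antidiagonal D, (p.1.factorial : K)⁻¹ * ((-1) ^ p.2 * (p.2.factorial : K)⁻¹)
      = if D = 0 then 1 else 0 := by
  have h := (Commute.all (1 : K) (-1)).add_pow' D
  rw [add_neg_cancel, zero_pow_eq] at h
  calc ∑ p ∈ antidiagonal D, (p.1.factorial : K)⁻¹ * ((-1) ^ p.2 * (p.2.factorial : K)⁻¹)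
      = (D.factorial : K)⁻¹ * ∑ p ∈ antidiagonal D, D.choose p.1 • (1 ^ p.1 * (-1 : K) ^ p.2) := by
        rw [mul_sum]
        refine sum_congr rfl fun p hp => ?_
        rw [mul_left_comm, inv_factorial_mul_inv_factorial (HasAntidiagonal.mem_antidiagonal.1 hp),
          nsmul_eq_mul, one_pow, one_mul]
        ring
    _ = if D = 0 then 1 else 0 := by
        rw [← h]
        split_ifs with hD <;> simp [hD]

section BinomialTransform

variable {A : Type*} [AddCommMonoid A]

def binomTransform (T : ℕ → ℕ → ℕ → A) (a E : ℕ) : A :=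
  ∑ q ∈ antidiagonal E, E.choose q.1 • T a q.1 q.2

variable {T : ℕ → ℕ → ℕ → A}

theorem binomTransform_succ_left (hT : ∀ a b c, T (a + 1) b c = T a (b + 1) c + T a b (c + 1))
    (a E : ℕ) : binomTransform T (a + 1) E = binomTransform T a (E + 1) := by
  rw [binomTransform, binomTransform, sum_antidiagonal_choose_succ_nsmul (fun i j => T a i j)]
  simp only [hT, smul_add, sum_add_distrib, add_comm (∑ q ∈ antidiagonal E, _ • T a (q.1 + 1) q.2)]
  congr 1
  refine sum_congr rfl fun q hq => ?_
  rw [Nat.choose_symm_of_eq_add (HasAntidiagonal.mem_antidiagonal.1 hq).symm]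

theorem binomTransform_eq (hT : ∀ a b c, T (a + 1) b c = T a (b + 1) c + T a b (c + 1))
    (a E : ℕ) : binomTransform T a E = binomTransform T 0 (a + E) := by
  induction a generalizing E with
  | zero => rw [zero_add]
  | succ a ih => rw [binomTransform_succ_left hT, ih, add_right_comm, add_assoc]

variable {K : Type*} [Field K] [CharZero K] [Module K A]

theorem sum_antidiagonal_neg_exp_smul (a E : ℕ) :
    ∑ q ∈ antidiagonal E,
        ((-1) ^ q.1 * (q.1.factorial : K)⁻¹ * ((-1) ^ q.2 * (q.2.factorial : K)⁻¹)) • T a q.1 q.2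
      = ((-1) ^ E * (E.factorial : K)⁻¹) • binomTransform T a E := by
  rw [binomTransform, smul_sum]
  refine sum_congr rfl fun q hq => ?_
  rw [HasAntidiagonal.mem_antidiagonal] at hq
  rw [← Nat.cast_smul_eq_nsmul K, smul_smul]
  congr 1
  rw [mul_mul_mul_comm, ← pow_add, hq, inv_factorial_mul_inv_factorial hq]
  ring

theorem sum_antidiagonal_exp_weights_smul
    (hT : ∀ a b c, T (a + 1) b c = T a (b + 1) c + T a b (c + 1)) (D : ℕ) :
    ∑ p ∈ antidiagonal D, ∑ q ∈ antidiagonal p.2,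
        ((p.1.factorial : K)⁻¹ * ((-1) ^ q.1 * (q.1.factorial : K)⁻¹)
          * ((-1) ^ q.2 * (q.2.factorial : K)⁻¹)) • T p.1 q.1 q.2
      = if D = 0 then T 0 0 0 else 0 := by
  calc _ = ∑ p ∈ antidiagonal D, ((p.1.factorial : K)⁻¹ * ((-1) ^ p.2 * (p.2.factorial : K)⁻¹))
          • binomTransform T 0 D := by
        refine sum_congr rfl fun p hp => ?_
        simp only [mul_assoc (p.1.factorial : K)⁻¹, ← smul_smul (p.1.factorial : K)⁻¹, ← smul_sum]
        rw [sum_antidiagonal_neg_exp_smul, binomTransform_eq hT,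
          HasAntidiagonal.mem_antidiagonal.1 hp]
    _ = if D = 0 then T 0 0 0 else 0 := by
        rw [← sum_smul, sum_antidiagonal_exp_mul_exp_neg]
        split_ifs with hD
        · simp [hD, binomTransform]
        · exact zero_smul K _

end BinomialTransform

section Contraction

variable {ι S : Type*} [Fintype ι] [CommSemiring S]

def trilinearContract (γ : ι → ι → ι → S) (P Q N : Matrix ι ι S) (κ μ ν : ι) : S :=
  ∑ α, ∑ β, ∑ ρ, γ β ρ α * (P α κ * (Q μ ρ * N ν β))

def adMatrix (γ : ι → ι → ι → S) (β : ι) : Matrix ι ι S := Matrix.of fun ρ α => γ β ρ α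

/-- With `[e_β, e_ρ] = ∑ α, γ β ρ α • e_α`, the matrix `M` (acting by `e_α ↦ ∑ σ, M α σ • e_σ`)
is a derivation of the bracket. -/
def IsDerivationOf (γ : ι → ι → ι → S) (M : Matrix ι ι S) : Prop :=
  ∀ β ρ σ, ∑ α, γ β ρ α * M α σ = ∑ τ, γ β τ σ * M ρ τ + ∑ τ, γ τ ρ σ * M β τ

variable {γ : ι → ι → ι → S} {M : Matrix ι ι S}

theorem trilinearContract_eq_sum_adMatrix (P Q N : Matrix ι ι S) (κ μ ν : ι) :
    trilinearContract γ P Q N κ μ ν = ∑ β, N ν β * (Q * adMatrix γ β * P) μ κ := by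
  simp only [trilinearContract, adMatrix, Matrix.mul_apply, Matrix.of_apply, sum_mul, mul_sum]
  rw [sum_comm]
  refine sum_congr rfl fun β _ => sum_congr rfl fun α _ => sum_congr rfl fun ρ _ => ?_
  ring

theorem IsDerivationOf.adMatrix_mul (h : IsDerivationOf γ M) (β : ι) :
    adMatrix γ β * M = M * adMatrix γ β + ∑ τ, M β τ • adMatrix γ τ := by
  ext ρ σ
  simp only [adMatrix, Matrix.mul_apply, Matrix.of_apply, Matrix.add_apply, Matrix.sum_apply,
    Matrix.smul_apply, smul_eq_mul, h β ρ σ]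
  congr 1 <;> refine sum_congr rfl fun τ _ => by ring

theorem IsDerivationOf.trilinearContract_mul_left (h : IsDerivationOf γ M) (P Q N : Matrix ι ι S)
    (κ μ ν : ι) :
    trilinearContract γ (M * P) Q N κ μ ν
      = trilinearContract γ P (Q * M) N κ μ ν + trilinearContract γ P Q (N * M) κ μ ν := by
  have hQ (β : ι) : Q * adMatrix γ β * (M * P)
      = Q * M * adMatrix γ β * P + ∑ τ, M β τ • (Q * adMatrix γ τ * P) := by
    rw [← Matrix.mul_assoc, Matrix.mul_assoc Q, h.adMatrix_mul, Matrix.mul_add, Matrix.add_mul,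
      Matrix.mul_sum, Matrix.sum_mul, ← Matrix.mul_assoc]
    simp only [Matrix.mul_smul, Matrix.smul_mul]
  simp only [trilinearContract_eq_sum_adMatrix, hQ, Matrix.add_apply, Matrix.sum_apply,
    Matrix.smul_apply, smul_eq_mul, mul_add, sum_add_distrib]
  congr 1
  simp only [mul_sum]
  rw [sum_comm]
  refine sum_congr rfl fun τ _ => ?_
  rw [Matrix.mul_apply (M := N) (N := M), sum_mul]
  exact sum_congr rfl fun β _ => (mul_assoc _ _ _).symm

theorem IsDerivationOf.trilinearContract_pow_succ [DecidableEq ι] (h : IsDerivationOf γ M)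
    (κ μ ν : ι) (a b c : ℕ) :
    trilinearContract γ (M ^ (a + 1)) (M ^ b) (M ^ c) κ μ ν
      = trilinearContract γ (M ^ a) (M ^ (b + 1)) (M ^ c) κ μ ν
        + trilinearContract γ (M ^ a) (M ^ b) (M ^ (c + 1)) κ μ ν := by
  rw [pow_succ', pow_succ, pow_succ, h.trilinearContract_mul_left]

theorem trilinearContract_one [DecidableEq ι] (κ μ ν : ι) :
    trilinearContract γ 1 1 1 κ μ ν = γ ν μ κ := by
  simp [trilinearContract, Matrix.one_apply]

theorem trilinearContract_smul {K : Type*} [CommSemiring K] [Module K S] [IsScalarTower K S S]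
    [SMulCommClass K S S] (x y z : K)
    (P Q N : Matrix ι ι S) (κ μ ν : ι) :
    trilinearContract γ (x • P) (y • Q) (z • N) κ μ ν
      = (x * y * z) • trilinearContract γ P Q N κ μ ν := by
  simp only [trilinearContract, smul_sum, Matrix.smul_apply, smul_mul_assoc, mul_smul_comm,
    smul_smul]
  refine sum_congr rfl fun α _ => sum_congr rfl fun β _ => sum_congr rfl fun ρ _ => ?_
  congr 1
  ring

open MvPowerSeries in
theorem homogeneousComponent_trilinearContract {σ R : Type*} [CommSemiring R]
    (c : ι → ι → ι → R) (P Q N : Matrix ι ι (MvPowerSeries σ R)) (κ μ ν : ι) (D : ℕ) :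
    homogeneousComponent D (trilinearContract (fun β ρ α => C (c β ρ α)) P Q N κ μ ν)
      = ∑ p ∈ antidiagonal D, ∑ q ∈ antidiagonal p.2,
          trilinearContract (fun β ρ α => C (c β ρ α)) (P.map (homogeneousComponent p.1))
            (Q.map (homogeneousComponent q.1)) (N.map (homogeneousComponent q.2)) κ μ ν := by
  simp only [trilinearContract, map_sum, homogeneousComponent_C_mul]
  simp only [homogeneousComponent_mul, Matrix.map_apply, mul_sum]
  simp only [sum_comm (s := (univ : Finset ι)) (t := antidiagonal _)]

end Contraction

theorem structConst_derivation_of_jacobi {R ι : Type*} [CommRing R] [Fintype ι]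
    {c : ι → ι → ι → R} (hanti : ∀ μ ν α, c μ ν α = - c ν μ α)
    (hjac : ∀ μ α β ν, ∑ ρ, (c μ α ρ * c ρ β ν + c α β ρ * c ρ μ ν + c β μ ρ * c ρ α ν) = 0)
    (β ρ l σ : ι) :
    ∑ α, c β ρ α * c α l σ = ∑ τ, c β τ σ * c ρ l τ + ∑ τ, c τ ρ σ * c β l τ := by
  have h := hjac β ρ l σ
  simp only [sum_add_distrib, hanti _ β, neg_mul, mul_neg, sum_neg_distrib] at h
  have e₁ : ∑ τ, c β τ σ * c ρ l τ = ∑ τ, c ρ l τ * c β τ σ := sum_congr rfl fun _ _ => mul_comm ..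
  have e₂ : ∑ τ, c τ ρ σ * c β l τ = ∑ τ, c β l τ * c τ ρ σ := sum_congr rfl fun _ _ => mul_comm ..
  linear_combination h - e₁ - e₂

section StructureConstants

variable {K : Type*} [Field K] {n : ℕ}

open MvPowerSeries

theorem isDerivationOf_Cmat {c : Fin n → Fin n → Fin n → K}
    (hanti : ∀ μ ν α, c μ ν α = - c ν μ α)
    (hjac : ∀ μ α β ν, ∑ ρ, (c μ α ρ * c ρ β ν + c α β ρ * c ρ μ ν + c β μ ρ * c ρ α ν) = 0) :
    IsDerivationOf (fun β ρ α => C (c β ρ α)) (Cmat c) := by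
  have hcollect (f : Fin n → K) (g : Fin n → Fin n → K) :
      ∑ τ, C (f τ) * ∑ l, C (g τ l) * X l
        = ∑ l, C (∑ τ, f τ * g τ l) * (X l : MvPowerSeries (Fin n) K) := by
    simp only [mul_sum, ← mul_assoc, ← map_mul, map_sum, sum_mul]
    exact sum_comm
  intro β ρ σ
  simp only [Cmat, hcollect, ← sum_add_distrib, ← add_mul, ← map_add,
    structConst_derivation_of_jacobi hanti hjac]

theorem isHomogeneous_Cmat (c : Fin n → Fin n → Fin n → K) (μ ν : Fin n) :
    (Cmat c μ ν).IsHomogeneous 1 :=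
  isHomogeneous_sum _ fun α _ =>
    zero_add 1 ▸ IsHomogeneous.mul (isHomogeneous_C _) (isHomogeneous_X α)

theorem deg_eq_degree (d : Fin n →₀ ℕ) : deg d = d.degree := rfl

theorem map_homogeneousComponent_matF (a : ℕ → K)
    {M : Matrix (Fin n) (Fin n) (MvPowerSeries (Fin n) K)} (hM : ∀ i j, (M i j).IsHomogeneous 1)
    (m : ℕ) : (matF a M).map (homogeneousComponent m) = a m • M ^ m := by
  ext i j d
  have hpow (k : ℕ) {d : Fin n →₀ ℕ} (hk : d.degree ≠ k) : coeff d ((M ^ k) i j) = 0 :=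
    IsHomogeneous.coeff_eq_zero (isHomogeneous_matrix_pow_apply hM k i j) (by rwa [one_mul])
  rw [Matrix.map_apply, coeff_homogeneousComponent, Matrix.smul_apply, coeff_smul]
  split_ifs with hd
  · rw [coeff_apply, matF, deg_eq_degree, hd]
    exact sum_eq_single m (fun k _ hk => by rw [hpow k (hd ▸ hk.symm), mul_zero])
      (fun hm => absurd (mem_range.2 (Nat.lt_succ_self m)) hm)
  · rw [hpow m hd, mul_zero]

end StructureConstants

open MvPowerSeries in
/-- `Σ_{α,β,ρ} C_{βρα} (e^C)_{ακ} (e^{-C})_{μρ} (e^{-C})_{νβ} = -C_{μνκ}`. -/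
theorem stmt13 {K : Type*} [Field K] [CharZero K] {n : ℕ}
    (c : Fin n → Fin n → Fin n → K)
    (hanti : ∀ μ ν α, c μ ν α = - c ν μ α)
    (hjac : ∀ μ α β ν, ∑ ρ, (c μ α ρ * c ρ β ν + c α β ρ * c ρ μ ν + c β μ ρ * c ρ α ν) = 0)
    (μ ν κ : Fin n) :
    ∑ α, ∑ β, ∑ ρ, (MvPowerSeries.C : K →+* MvPowerSeries (Fin n) K) (c β ρ α)
        * (matF (fun m => (m.factorial : K)⁻¹) (Cmat c) α κ
            * (matF (fun m => (-1 : K) ^ m * (m.factorial : K)⁻¹) (Cmat c) μ ρ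
                * matF (fun m => (-1 : K) ^ m * (m.factorial : K)⁻¹) (Cmat c) ν β))
      = - (MvPowerSeries.C : K →+* MvPowerSeries (Fin n) K) (c μ ν κ) := by
  refine ext_homogeneousComponent fun D => ?_
  rw [← trilinearContract, homogeneousComponent_trilinearContract]
  simp only [map_homogeneousComponent_matF _ (isHomogeneous_Cmat c), trilinearContract_smul]
  rw [sum_antidiagonal_exp_weights_smul (T := fun a b e =>
      trilinearContract (fun β ρ α => C (c β ρ α)) (Cmat c ^ a) (Cmat c ^ b) (Cmat c ^ e) κ μ ν)
      ((isDerivationOf_Cmat hanti hjac).trilinearContract_pow_succ κ μ ν),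
    map_neg, homogeneousComponent_C]
  split_ifs
  · rw [pow_zero, trilinearContract_one, hanti, map_neg]
  · rw [neg_zero]

end
end

section
/- In the Weyl algebra with generators x_1,...,x_n, ∂_1,...,∂_n ([∂_μ,x_ν] = δ_{μν}), the operators x̂_μ = x_μ T + ia_μ (x·∂) S, where T = A/(e^A-1), S = 1/A - 1/(e^A-1) are formal power series in A = ia·∂ and x·∂ = Σ_α x_α∂_α, satisfy the κ-deformed commutation relations [x̂_μ, x̂_ν] = i(a_μ x̂_ν - a_ν x̂_μ). -/
/-!
With `f = X/(e^X - 1)` and `g = (1 - f)/X`, the operators are `T = f(A)` and `S = g(A)`. Since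
`A` lowers the degree, it acts locally nilpotently on polynomials, so `h ↦ h(A)` is an algebra
homomorphism from `ℂ⟦X⟧`. From `[A, x_ν] = i a_ν` and `[A, x·∂] = A` one gets
`[h(A), x_ν] = i a_ν h'(A)` and `[h(A), x·∂] = (X h')(A)`. Expanding `[x̂_μ, x̂_ν]` with these
rules, what is left is `(i a_ν x_μ - i a_μ x_ν) · (f' f + X f' g - g f)(A)`. This equals
`-(i a_ν x_μ - i a_μ x_ν) · T` because `f' = (g - 1) f`, which is the Riccati equation
`X f' = f (1 - f - X)` of the Bernoulli generating function.
-/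

noncomputable section

open MvPolynomial

variable {n : ℕ}

/-- multiplication by `x_μ` as an operator on polynomials. -/
def xop (μ : Fin n) : Module.End ℂ (MvPolynomial (Fin n) ℂ) :=
  LinearMap.mulLeft ℂ (MvPolynomial.X μ)

/-- the partial derivative `∂_μ` as an operator on polynomials. -/
def dop (μ : Fin n) : Module.End ℂ (MvPolynomial (Fin n) ℂ) :=
  (MvPolynomial.pderiv μ).toLinearMap

/-- the operator `A = i a·∂`. -/
def Aop (a : Fin n → ℂ) : Module.End ℂ (MvPolynomial (Fin n) ℂ) :=
  ∑ α, (Complex.I * a α) • dop α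

/-- the operator `x·∂ = Σ_α x_α ∂_α`. -/
def xdop : Module.End ℂ (MvPolynomial (Fin n) ℂ) := ∑ α : Fin n, xop α * dop α

lemma Ring.lie_add_smul_add_smul {R A : Type*} [CommRing R] [Ring A] [Module R A]
    [IsScalarTower R A A] [SMulCommClass R A A] (p r q : A) (s t : R) :
    ⁅p + s • q, r + t • q⁆ = ⁅p, r⁆ + t • ⁅p, q⁆ - s • ⁅r, q⁆ := by
  simp only [Ring.lie_def, add_mul, mul_add, smul_mul_assoc, mul_smul_comm]
  module

lemma Commute.aeval_right {R A : Type*} [CommSemiring R] [Semiring A] [Algebra R A] {a b : A}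
    (h : Commute b a) (p : Polynomial R) : Commute b (Polynomial.aeval a p) := by
  rw [Polynomial.aeval_eq_sum_range]
  exact Commute.sum_right _ _ _ fun i _ => (h.pow_right i).smul_right _

namespace Polynomial

variable {R M : Type*} [CommRing R] [AddCommGroup M] [Module R M] {A : Module.End R M}

lemma X_pow_dvd_sub_trunc (N : ℕ) (p : R[X]) :
    X ^ N ∣ p - PowerSeries.trunc N (p : PowerSeries R) := by
  refine X_pow_dvd_iff.mpr fun d hd => ?_
  rw [coeff_sub, PowerSeries.coeff_trunc, if_pos hd, coeff_coe, sub_self]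

lemma aeval_apply_eq_zero_of_X_pow_dvd {N : ℕ} {x : M} (hx : (A ^ N) x = 0) {p : R[X]}
    (hp : X ^ N ∣ p) : aeval A p x = 0 := by
  obtain ⟨q, rfl⟩ := hp
  rw [mul_comm, map_mul, map_pow, aeval_X, Module.End.mul_apply, hx, map_zero]

lemma aeval_trunc_apply {N : ℕ} {x : M} (hx : (A ^ N) x = 0) (p : R[X]) :
    aeval A (PowerSeries.trunc N (p : PowerSeries R)) x = aeval A p x := by
  rw [← sub_eq_zero, ← LinearMap.sub_apply, ← map_sub]
  exact aeval_apply_eq_zero_of_X_pow_dvd hx (dvd_sub_comm.mp (X_pow_dvd_sub_trunc N p))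

lemma pow_apply_aeval_eq_zero {N : ℕ} {x : M} (hx : (A ^ N) x = 0) (p : R[X]) :
    (A ^ N) (aeval A p x) = 0 := by
  rw [← Module.End.mul_apply, (((Commute.refl A).pow_left N).aeval_right p).eq,
    Module.End.mul_apply, hx, map_zero]

lemma aeval_mul_eq_of_mul_eq {𝒜 : Type*} [Ring 𝒜] [Algebra R 𝒜] {a b k : 𝒜}
    (hab : a * b = b * a + k) (hak : Commute a k) (p : R[X]) :
    aeval a p * b = b * aeval a p + k * aeval a (derivative p) := by
  induction p using Polynomial.induction_on with
  | C r => simp [Algebra.commutes]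
  | add p q hp hq => simp only [map_add, add_mul, mul_add, hp, hq]; abel
  | monomial j r ih =>
    rw [pow_succ, ← mul_assoc]
    generalize C r * X ^ j = q at ih ⊢
    rw [derivative_mul, derivative_X, mul_one, map_mul, map_add, map_mul, aeval_X,
      mul_assoc, hab, mul_add, ← mul_assoc, ih, ← (hak.symm.aeval_right q).eq]
    noncomm_ring

end Polynomial

namespace PowerSeries

variable {R M : Type*} [CommRing R] [AddCommGroup M] [Module R M] {A : Module.End R M}

lemma aeval_trunc_apply_of_le {N L : ℕ} {x : M} (hx : (A ^ N) x = 0) (hNL : N ≤ L)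
    (f : R⟦X⟧) :
    Polynomial.aeval A (trunc L f) x = Polynomial.aeval A (trunc N f) x := by
  rw [← Polynomial.aeval_trunc_apply hx, trunc_trunc_of_le f hNL]

lemma aeval_trunc_apply_eq {N L : ℕ} {x : M} (hN : (A ^ N) x = 0) (hL : (A ^ L) x = 0)
    (f : R⟦X⟧) : Polynomial.aeval A (trunc N f) x = Polynomial.aeval A (trunc L f) x := by
  rcases le_total N L with h | h
  · exact (aeval_trunc_apply_of_le hN h f).symm
  · exact aeval_trunc_apply_of_le hL h f

lemma aeval_trunc_mul_apply {N : ℕ} {x : M} (hx : (A ^ N) x = 0) (f g : R⟦X⟧) :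
    Polynomial.aeval A (trunc N (f * g)) x
      = Polynomial.aeval A (trunc N f) (Polynomial.aeval A (trunc N g) x) := by
  rw [← trunc_trunc_mul_trunc, ← Polynomial.coe_mul, Polynomial.aeval_trunc_apply hx, map_mul,
    Module.End.mul_apply]

variable (hA : ∀ x, ∃ N, (A ^ N) x = 0)

/-- `f(A)` for a locally nilpotent `A`: on `x` it is the truncation of `f` below any `N` with
`A ^ N x = 0` evaluated at `A`, which does not depend on `N` (`aeval_trunc_apply_eq`). -/
def evalEnd : R⟦X⟧ →ₐ[R] Module.End R M where
  toFun f :=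
    { toFun x := Polynomial.aeval A (trunc (hA x).choose f) x
      map_add' x y := by
        have hx := (hA x).choose_spec
        have hy := (hA y).choose_spec
        set L := (hA x).choose + (hA y).choose
        have hxL : (A ^ L) x = 0 := Module.End.pow_map_zero_of_le (by omega) hx
        have hyL : (A ^ L) y = 0 := Module.End.pow_map_zero_of_le (by omega) hy
        rw [aeval_trunc_apply_eq (hA (x + y)).choose_spec (by rw [map_add, hxL, hyL, add_zero]),
          aeval_trunc_apply_eq hx hxL, aeval_trunc_apply_eq hy hyL, map_add]
      map_smul' r x := by
        have hx := (hA x).choose_spec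
        rw [aeval_trunc_apply_eq (hA (r • x)).choose_spec (by rw [map_smul, hx, smul_zero]),
          map_smul, RingHom.id_apply] }
  map_one' := LinearMap.ext fun x => by
    have hx := (hA x).choose_spec
    have hx' : (A ^ ((hA x).choose + 1)) x = 0 := Module.End.pow_map_zero_of_le (by omega) hx
    simp only [LinearMap.coe_mk, AddHom.coe_mk]
    rw [aeval_trunc_apply_eq hx hx', trunc_one, map_one, Module.End.one_apply]
  map_mul' f g := LinearMap.ext fun x => by
    have hx := (hA x).choose_spec
    simp only [LinearMap.coe_mk, AddHom.coe_mk, Module.End.mul_apply]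
    rw [aeval_trunc_mul_apply hx, aeval_trunc_apply_eq
      (Polynomial.pow_apply_aeval_eq_zero hx _) (hA _).choose_spec]
  map_zero' := LinearMap.ext fun x => by simp
  map_add' f g := LinearMap.ext fun x => by simp
  commutes' r := LinearMap.ext fun x => by
    have hx := (hA x).choose_spec
    have hx' : (A ^ ((hA x).choose + 1)) x = 0 := Module.End.pow_map_zero_of_le (by omega) hx
    simp only [LinearMap.coe_mk, AddHom.coe_mk]
    rw [aeval_trunc_apply_eq hx hx', ← PowerSeries.C_eq_algebraMap, trunc_C, Polynomial.aeval_C]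

lemma evalEnd_apply {N : ℕ} {x : M} (hx : (A ^ N) x = 0) (f : R⟦X⟧) :
    evalEnd hA f x = Polynomial.aeval A (trunc N f) x :=
  aeval_trunc_apply_eq (hA x).choose_spec hx f

lemma evalEnd_apply_eq_sum {N : ℕ} {x : M} (hx : (A ^ N) x = 0) (f : R⟦X⟧) :
    evalEnd hA f x = ∑ m ∈ Finset.range N, coeff m f • (A ^ m) x := by
  rw [evalEnd_apply hA hx, Polynomial.aeval_def, eval₂_trunc_eq_sum_range, LinearMap.sum_apply]
  simp [Module.algebraMap_end_apply]

lemma evalEnd_X : evalEnd hA X = A := LinearMap.ext fun x => by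
  obtain ⟨N, hx⟩ := hA x
  rw [evalEnd_apply hA (Module.End.pow_map_zero_of_le (Nat.le_add_right N 2) hx), trunc_X,
    Polynomial.aeval_X]

lemma evalEnd_mul_eq_of_mul_eq {B K : Module.End R M} (hAB : A * B = B * A + K)
    (hAK : Commute A K) (f : R⟦X⟧) :
    evalEnd hA f * B = B * evalEnd hA f + K * evalEnd hA (d⁄dX R f) := by
  ext x
  obtain ⟨N, hx⟩ := hA x
  have hx' : (A ^ (N + 1)) x = 0 := Module.End.pow_map_zero_of_le (Nat.le_succ N) hx
  have hBx : (A ^ (N + 1)) (B x) = 0 := by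
    have hcomm := congr($(Polynomial.aeval_mul_eq_of_mul_eq hAB hAK
      (Polynomial.X ^ (N + 1) : Polynomial R)) x)
    simp only [map_pow, Polynomial.aeval_X, Module.End.mul_apply, LinearMap.add_apply] at hcomm
    rw [hcomm, hx', map_zero, zero_add,
      Polynomial.aeval_apply_eq_zero_of_X_pow_dvd hx (by simp), map_zero]
  simp only [Module.End.mul_apply, LinearMap.add_apply]
  rw [evalEnd_apply hA hBx, evalEnd_apply hA hx', evalEnd_apply hA hx, trunc_derivative,
    ← Module.End.mul_apply, Polynomial.aeval_mul_eq_of_mul_eq hAB hAK]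
  rfl

end PowerSeries

namespace MvPolynomial

lemma totalDegree_pderiv_le {σ R : Type*} [CommSemiring R] {p : MvPolynomial σ R} {d : ℕ}
    (hp : p.totalDegree ≤ d + 1) (i : σ) : (pderiv i p).totalDegree ≤ d := by
  refine Finset.sup_le fun m hm => ?_
  have hcoeff : coeff (m + Finsupp.single i 1) p ≠ 0 := by
    intro h
    rw [mem_support_iff, coeff_pderiv, h, zero_mul] at hm
    exact hm rfl
  have := (le_totalDegree (mem_support_iff.mpr hcoeff)).trans hp
  change Finsupp.degree (m + Finsupp.single i 1) ≤ d + 1 at this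
  rw [map_add, Finsupp.degree_single] at this
  exact Nat.le_of_succ_le_succ this

lemma pderiv_pderiv_comm {σ R : Type*} [CommRing R] (i j : σ) (p : MvPolynomial σ R) :
    pderiv i (pderiv j p) = pderiv j (pderiv i p) := by
  classical
  have h : ⁅pderiv i, pderiv j⁆ = (0 : Derivation R (MvPolynomial σ R) _) :=
    derivation_ext fun k => by
      rw [Derivation.commutator_apply]
      simp [pderiv_X, Pi.single_apply, apply_ite]
  exact sub_eq_zero.mp congr($h p)

end MvPolynomial

lemma xop_comm (μ ν : Fin n) : Commute (xop μ) (xop ν) :=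
  LinearMap.ext fun p => by simp [xop, mul_left_comm]

lemma dop_comm (α β : Fin n) : Commute (dop α) (dop β) :=
  LinearMap.ext fun p => pderiv_pderiv_comm α β p

lemma dop_mul_xop (α ν : Fin n) :
    dop α * xop ν = xop ν * dop α + if α = ν then 1 else 0 := by
  refine LinearMap.ext fun p => ?_
  by_cases h : α = ν
  · subst h
    simp [dop, xop, add_comm]
  · simp [dop, xop, pderiv_X_of_ne (Ne.symm h), h]

lemma Aop_mul_xop (a : Fin n → ℂ) (ν : Fin n) :
    Aop a * xop ν = xop ν * Aop a + (Complex.I * a ν) • 1 := by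
  simp only [Aop, Finset.sum_mul, Finset.mul_sum, smul_mul_assoc, mul_smul_comm, dop_mul_xop,
    smul_add, Finset.sum_add_distrib, smul_ite, smul_zero, Finset.sum_ite_eq', Finset.mem_univ,
    if_true]

lemma xdop_mul_xop (ν : Fin n) : xdop * xop ν = xop ν * xdop + xop ν := by
  simp only [xdop, Finset.sum_mul, Finset.mul_sum, mul_assoc, dop_mul_xop, mul_add, mul_ite,
    mul_one, mul_zero, Finset.sum_add_distrib, Finset.sum_ite_eq', Finset.mem_univ, if_true]
  congr 1
  refine Finset.sum_congr rfl fun α _ => ?_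
  rw [← mul_assoc, ← mul_assoc, (xop_comm α ν).eq]

lemma Aop_mul_xdop (a : Fin n → ℂ) : Aop a * xdop = xdop * Aop a + Aop a := by
  have h (α β : Fin n) :
      dop α * (xop β * dop β) = xop β * dop β * dop α + if α = β then dop β else 0 := by
    rw [← mul_assoc, dop_mul_xop, add_mul, mul_assoc, (dop_comm α β).eq, ← mul_assoc, ite_mul,
      one_mul, zero_mul]
  simp only [Aop, xdop, Finset.sum_mul, Finset.mul_sum, smul_mul_assoc, mul_smul_comm, h, smul_add,
    Finset.sum_add_distrib, smul_ite, smul_zero, Finset.sum_ite_eq', Finset.mem_univ, if_true,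
    Finset.smul_sum]
  rw [Finset.sum_comm]

lemma Aop_apply (a : Fin n → ℂ) (p : MvPolynomial (Fin n) ℂ) :
    Aop a p = ∑ α, (Complex.I * a α) • pderiv α p := by
  simp [Aop, dop]

lemma Aop_pow_apply_eq_zero (a : Fin n → ℂ) (d : ℕ) {p : MvPolynomial (Fin n) ℂ}
    (hp : p.totalDegree ≤ d) : (Aop a ^ (d + 1)) p = 0 := by
  induction d generalizing p with
  | zero =>
    rw [Nat.le_zero, totalDegree_eq_zero_iff_eq_C] at hp
    rw [zero_add, pow_one, Aop_apply, hp]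
    simp
  | succ d ih =>
    rw [pow_succ, Module.End.mul_apply, Aop_apply]
    exact ih (totalDegree_finsetSum_le fun α _ =>
      (totalDegree_smul_le _ _).trans (totalDegree_pderiv_le hp α))

lemma Aop_locallyNilpotent (a : Fin n → ℂ) (p : MvPolynomial (Fin n) ℂ) :
    ∃ N, (Aop a ^ N) p = 0 :=
  ⟨_, Aop_pow_apply_eq_zero a _ le_rfl⟩

open scoped PowerSeries

def evalA (a : Fin n → ℂ) : ℂ⟦X⟧ →ₐ[ℂ] Module.End ℂ (MvPolynomial (Fin n) ℂ) :=
  PowerSeries.evalEnd (Aop_locallyNilpotent a)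

section evalA

variable (a : Fin n → ℂ)

lemma evalA_mul_xop (f : ℂ⟦X⟧) (ν : Fin n) :
    evalA a f * xop ν = xop ν * evalA a f + (Complex.I * a ν) • evalA a (d⁄dX ℂ f) := by
  rw [evalA, PowerSeries.evalEnd_mul_eq_of_mul_eq _ (Aop_mul_xop a ν)
    (Commute.smul_right (Commute.one_right _) _), smul_one_mul]

lemma evalA_mul_xdop (f : ℂ⟦X⟧) :
    evalA a f * xdop = xdop * evalA a f + evalA a (PowerSeries.X * d⁄dX ℂ f) := by
  rw [evalA, PowerSeries.evalEnd_mul_eq_of_mul_eq _ (Aop_mul_xdop a) (Commute.refl _), map_mul,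
    PowerSeries.evalEnd_X]

lemma lie_xop_mul_evalA (f : ℂ⟦X⟧) (μ ν : Fin n) :
    ⁅xop μ * evalA a f, xop ν * evalA a f⁆
      = ((Complex.I * a ν) • xop μ - (Complex.I * a μ) • xop ν)
        * evalA a (d⁄dX ℂ f * f) := by
  have h (α β : Fin n) : xop α * evalA a f * (xop β * evalA a f)
      = xop α * xop β * evalA a (f * f)
        + (Complex.I * a β) • (xop α * evalA a (d⁄dX ℂ f * f)) := by
    simp only [mul_assoc, ← mul_assoc (evalA a f), evalA_mul_xop, add_mul, mul_add,
      smul_mul_assoc, mul_smul_comm, map_mul]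
  rw [Ring.lie_def, h, h, (xop_comm μ ν).eq, sub_mul, smul_mul_assoc, smul_mul_assoc]
  abel

lemma lie_xop_mul_evalA_xdop_mul_evalA (f g : ℂ⟦X⟧) (μ : Fin n) :
    ⁅xop μ * evalA a f, xdop * evalA a g⁆
      = xop μ * evalA a (PowerSeries.X * d⁄dX ℂ f * g - g * f)
        - (Complex.I * a μ) • (xdop * evalA a (d⁄dX ℂ g * f)) := by
  have h₁ : xop μ * evalA a f * (xdop * evalA a g)
      = xop μ * xdop * evalA a (f * g) + xop μ * evalA a (PowerSeries.X * d⁄dX ℂ f * g) := by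
    simp only [mul_assoc, ← mul_assoc (evalA a f), evalA_mul_xdop, add_mul, mul_add, map_mul]
  have h₂ : xdop * evalA a g * (xop μ * evalA a f)
      = xop μ * xdop * evalA a (g * f) + xop μ * evalA a (g * f)
        + (Complex.I * a μ) • (xdop * evalA a (d⁄dX ℂ g * f)) := by
    simp only [mul_assoc, ← mul_assoc (evalA a g), evalA_mul_xop, add_mul, mul_add,
      smul_mul_assoc, mul_smul_comm, map_mul]
    simp only [← mul_assoc, xdop_mul_xop, add_mul]
  rw [Ring.lie_def, h₁, h₂, mul_comm g f, map_sub, mul_sub]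
  abel

lemma lie_xop_mul_add_xdop_mul {f g : ℂ⟦X⟧} (hg : PowerSeries.X * g = 1 - f)
    (hf : d⁄dX ℂ f = (g - 1) * f) (μ ν : Fin n) :
    ⁅xop μ * evalA a f + (Complex.I * a μ) • (xdop * evalA a g),
        xop ν * evalA a f + (Complex.I * a ν) • (xdop * evalA a g)⁆
      = (Complex.I * a μ) • (xop ν * evalA a f + (Complex.I * a ν) • (xdop * evalA a g))
        - (Complex.I * a ν)
          • (xop μ * evalA a f + (Complex.I * a μ) • (xdop * evalA a g)) := by
  have hfg : d⁄dX ℂ f * f + (PowerSeries.X * d⁄dX ℂ f * g - g * f) + f = 0 := by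
    rw [hf]
    linear_combination (g - 1) * f * hg
  have hK (κ : Fin n) : xop κ * evalA a (d⁄dX ℂ f * f)
      + xop κ * evalA a (PowerSeries.X * d⁄dX ℂ f * g - g * f) + xop κ * evalA a f = 0 := by
    rw [← mul_add, ← mul_add, ← map_add, ← map_add, hfg, map_zero, mul_zero]
  refine (Ring.lie_add_smul_add_smul _ _ _ _ _).trans ?_
  rw [lie_xop_mul_evalA, lie_xop_mul_evalA_xdop_mul_evalA, lie_xop_mul_evalA_xdop_mul_evalA]
  simp only [sub_mul, smul_mul_assoc]
  linear_combination (norm := module) (Complex.I * a ν) • hK μ - (Complex.I * a μ) • hK ν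

end evalA

namespace PowerSeries

section Bernoulli

variable (A : Type*) [CommRing A] [Algebra ℚ A]

lemma X_mul_derivative_bernoulliPowerSeries :
    X * d⁄dX A (bernoulliPowerSeries A)
      = bernoulliPowerSeries A * (1 - bernoulliPowerSeries A - X) := by
  have h := bernoulliPowerSeries_mul_exp_sub_one A
  have h' := congr(d⁄dX A $h)
  rw [Derivation.leibniz, map_sub, derivative_exp, Derivation.map_one_eq_zero, sub_zero,
    derivative_X, smul_eq_mul, smul_eq_mul] at h'
  linear_combination bernoulliPowerSeries A * h' - d⁄dX A (bernoulliPowerSeries A) * h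
    - bernoulliPowerSeries A * h

variable {A} in
lemma derivative_bernoulliPowerSeries {g : A⟦X⟧} (hg : X * g = 1 - bernoulliPowerSeries A) :
    d⁄dX A (bernoulliPowerSeries A) = (g - 1) * bernoulliPowerSeries A := by
  refine X_mul_cancel ?_
  rw [X_mul_derivative_bernoulliPowerSeries]
  linear_combination -bernoulliPowerSeries A * hg

variable {K : Type*} [Field K] [CharZero K]

lemma mk_bernoulli_div_factorial :
    mk (fun m => (bernoulli m : K) / m.factorial) = bernoulliPowerSeries K := by
  ext m
  simp [bernoulliPowerSeries]

lemma X_mul_mk_neg_bernoulli_succ :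
    X * mk (fun m => -((bernoulli (m + 1) : K) / (m + 1).factorial))
      = 1 - bernoulliPowerSeries K := by
  ext (_ | m) <;> simp [bernoulliPowerSeries, coeff_succ_X_mul]

end Bernoulli

end PowerSeries

/-- `Φ c` is the operator `Σ_m c_m A^m` (a finite sum on each polynomial); with Mathlib's
convention `B₁ = -1/2`, `T` is `A/(e^A-1)` and `S` is `1/A - 1/(e^A-1)`. -/
theorem stmt18 (a : Fin n → ℂ)
    (Φ : (ℕ → ℂ) → Module.End ℂ (MvPolynomial (Fin n) ℂ))
    (hΦ : ∀ (c : ℕ → ℂ) (p : MvPolynomial (Fin n) ℂ),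
      Φ c p = ∑ m ∈ Finset.range (p.totalDegree + 1), c m • ((Aop a ^ m) p))
    (T S : Module.End ℂ (MvPolynomial (Fin n) ℂ))
    (hT : T = Φ fun m => (bernoulli m : ℂ) / (m.factorial : ℂ))
    (hS : S = Φ fun m => -((bernoulli (m + 1) : ℂ) / ((m + 1).factorial : ℂ)))
    (xhat : Fin n → Module.End ℂ (MvPolynomial (Fin n) ℂ))
    (hxhat : ∀ μ, xhat μ = xop μ * T + (Complex.I * a μ) • (xdop * S)) :
    ∀ μ ν, ⁅xhat μ, xhat ν⁆
      = (Complex.I * a μ) • xhat ν - (Complex.I * a ν) • xhat μ := by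
  have hΦA (c : ℕ → ℂ) : Φ c = evalA a (PowerSeries.mk c) := LinearMap.ext fun p => by
    rw [hΦ, evalA, PowerSeries.evalEnd_apply_eq_sum _ (Aop_pow_apply_eq_zero a _ le_rfl)]
    simp only [PowerSeries.coeff_mk]
  have hg := PowerSeries.X_mul_mk_neg_bernoulli_succ (K := ℂ)
  rw [hΦA, PowerSeries.mk_bernoulli_div_factorial] at hT
  rw [hΦA] at hS
  intro μ ν
  rw [hxhat, hxhat, hT, hS]
  exact lie_xop_mul_add_xdop_mul a hg (PowerSeries.derivative_bernoulliPowerSeries hg) μ ν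

end
end
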